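/- arXiv:1810.09519 — 3 statements merged into one kernel-verified Lean document; each statement's English description precedes it below -/
import Mathlib

section
/- Let f(x) = θᵀx + b, and let Ψf(x,y) = θᵀx + b - yε‖θ‖_q. Let ℓ_h(f,z) = max{0, 1 - y·f(x)} be the hinge loss and ℓ_{h,01}(f,z) = 1{ℓ_h(f,z) > 0}. Then for each data point z = (x,y), ε‖θ‖_q · ℓ_{h,01}(f,z) ≤ ℓ_h(Ψf,z) - ℓ_h(f,z) ≤ ε‖θ‖_q · ℓ_{h,01}(Ψf,z). -/
open scoped ENNReal

lemma hinge_aux (t c : ℝ) (hc : 0 ≤ c) :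
    c * (if 0 < max 0 t then (1:ℝ) else 0) ≤ max 0 (t + c) - max 0 t ∧
    max 0 (t + c) - max 0 t ≤ c * (if 0 < max 0 (t + c) then (1:ℝ) else 0) := by
  rcases le_or_gt t 0 with ht | ht <;> rcases le_or_gt (t + c) 0 with htc | htc <;>
    constructor <;>
    · split_ifs with h <;>
      simp_all [max_eq_left, max_eq_right, le_of_lt] <;> nlinarith [le_max_left 0 t, le_max_left 0 (t+c), le_max_right 0 t, le_max_right 0 (t+c)]

/-- For `f(x) = θᵀx + b` and `Ψf(x,y) = θᵀx + b - y ε ‖θ‖_q`,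
with the hinge loss `ℓ_h(f,z) = max{0, 1 - y f(x)}` and its positivity
indicator `ℓ_{h,01}`, we have
`ε‖θ‖_q ℓ_{h,01}(f,z) ≤ ℓ_h(Ψf,z) - ℓ_h(f,z) ≤ ε‖θ‖_q ℓ_{h,01}(Ψf,z)`. -/
theorem hinge_loss_sup_transform_bounds {m : ℕ} (q : ℝ≥0∞) [Fact (1 ≤ q)]
    (θ : Fin m → ℝ) (b ε : ℝ) (hε : 0 ≤ ε)
    (x : Fin m → ℝ) (y : ℝ) (hy : y = 1 ∨ y = -1) :
    ε * ‖(WithLp.equiv q (Fin m → ℝ)).symm θ‖ *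
        (if 0 < max 0 (1 - y * ((∑ i, θ i * x i) + b)) then (1 : ℝ) else 0)
      ≤ max 0 (1 - y * ((∑ i, θ i * x i) + b
            - y * ε * ‖(WithLp.equiv q (Fin m → ℝ)).symm θ‖))
        - max 0 (1 - y * ((∑ i, θ i * x i) + b))
    ∧ max 0 (1 - y * ((∑ i, θ i * x i) + b
            - y * ε * ‖(WithLp.equiv q (Fin m → ℝ)).symm θ‖))
        - max 0 (1 - y * ((∑ i, θ i * x i) + b))
      ≤ ε * ‖(WithLp.equiv q (Fin m → ℝ)).symm θ‖ *
          (if 0 < max 0 (1 - y * ((∑ i, θ i * x i) + b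
              - y * ε * ‖(WithLp.equiv q (Fin m → ℝ)).symm θ‖)) then (1 : ℝ) else 0) := by
  have hy2 : y * y = 1 := by rcases hy with h | h <;> simp [h]
  set c := ε * ‖(WithLp.equiv q (Fin m → ℝ)).symm θ‖ with hcdef
  have hc : 0 ≤ c := mul_nonneg hε (norm_nonneg _)
  set t := 1 - y * ((∑ i, θ i * x i) + b) with htdef
  have key : 1 - y * ((∑ i, θ i * x i) + b - y * ε * ‖(WithLp.equiv q (Fin m → ℝ)).symm θ‖) = t + c := by
    simp only [htdef, hcdef]; ring_nf; nlinarith [hy2]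
  rw [key]
  exact hinge_aux t c hc
end

section
/- Define Ψ₊f(x) = sup_{w ∈ B(ε)} f(x+w) and Ψ₋f(x) = inf_{w ∈ B(ε)} f(x+w). For the truncated loss ℓ_{r,B}(t,y) = min{|t-y|^r, B^r} and the two-argument loss ℓ^±_{r,B}(s,t,y) = max{ min{((s-y)₊)^r, B^r}, min{((t-y)₋)^r, B^r} }, we have sup_{w ∈ B(ε)} ℓ_{r,B}(f(x+w), y) = ℓ^±_{r,B}(Ψ₊f(x), Ψ₋f(x), y). -/
private lemma pointwise_loss (y r B : ℝ) (hr : 0 < r) (u : ℝ) :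
    min (|u - y| ^ r) (B ^ r)
      = max (min ((max 0 (u - y)) ^ r) (B ^ r))
            (min ((max 0 (-(u - y))) ^ r) (B ^ r)) := by
  have habs : max (max 0 (u - y)) (max 0 (-(u - y))) = |u - y| := by
    rw [max_max_max_comm, max_self, ← abs_eq_max_neg]
    exact max_eq_right (abs_nonneg _)
  rw [← habs]
  have hmaxpow : (max (max 0 (u - y)) (max 0 (-(u - y)))) ^ r
      = max ((max 0 (u - y)) ^ r) ((max 0 (-(u - y))) ^ r) := by
    rcases le_total (max 0 (u - y)) (max 0 (-(u - y))) with h | h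
    · rw [max_eq_right h, max_eq_right (Real.rpow_le_rpow (le_max_left _ _) h hr.le)]
    · rw [max_eq_left h, max_eq_left (Real.rpow_le_rpow (le_max_left _ _) h hr.le)]
  rw [hmaxpow, min_max_distrib_right]

/-- With `Ψ₊f(x) = sup_{w∈S} f(x+w)` and `Ψ₋f(x) = inf_{w∈S} f(x+w)`,
the adversarial truncated loss satisfies
`sup_{w∈S} ℓ_{r,B}(f(x+w), y) = ℓ^±_{r,B}(Ψ₊f(x), Ψ₋f(x), y)`, where
`ℓ_{r,B}(t,y) = min{|t-y|^r, B^r}` and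
`ℓ^±_{r,B}(s,t,y) = max{min{((s-y)₊)^r, B^r}, min{((t-y)₋)^r, B^r}}`. -/
theorem regression_sup_transform_loss {m : ℕ} (S : Set (Fin m → ℝ))
    (hS : IsCompact S) (hSne : S.Nonempty)
    (f : (Fin m → ℝ) → ℝ) (hf : Continuous f) (x : Fin m → ℝ)
    (y r B : ℝ) (hr : 0 < r) (hB : 0 < B) :
    sSup ((fun w => min (|f (x + w) - y| ^ r) (B ^ r)) '' S)
      = max (min ((max 0 (sSup ((fun w => f (x + w)) '' S) - y)) ^ r) (B ^ r))
            (min ((max 0 (-(sInf ((fun w => f (x + w)) '' S) - y))) ^ r) (B ^ r)) := by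
  set g : (Fin m → ℝ) → ℝ := fun w => f (x + w) with hg
  have hgc : Continuous g := hf.comp (continuous_const.add continuous_id)
  have hφc : Continuous fun w => min (|g w - y| ^ r) (B ^ r) := by
    apply Continuous.min _ continuous_const
    exact ((hgc.sub continuous_const).abs).rpow_const (fun _ => Or.inr hr.le)
  set M := sSup (g '' S) with hM
  set m' := sInf (g '' S) with hm'
  have hbdd : BddAbove (g '' S) := (hS.image hgc).bddAbove
  have hbdd' : BddBelow (g '' S) := (hS.image hgc).bddBelow
  have hbddφ : BddAbove ((fun w => min (|g w - y| ^ r) (B ^ r)) '' S) :=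
    (hS.image hφc).bddAbove
  obtain ⟨w₁, hw₁, hw₁e⟩ := hS.exists_sSup_image_eq hSne hgc.continuousOn
  obtain ⟨w₂, hw₂, hw₂e⟩ := hS.exists_sInf_image_eq hSne hgc.continuousOn
  apply le_antisymm
  · apply csSup_le (hSne.image _)
    rintro z ⟨w, hw, rfl⟩
    show min (|g w - y| ^ r) (B ^ r) ≤ _
    rw [pointwise_loss y r B hr]
    have h1 : g w ≤ M := le_csSup hbdd ⟨w, hw, rfl⟩
    have h2 : m' ≤ g w := csInf_le hbdd' ⟨w, hw, rfl⟩
    apply max_le_max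
    · exact min_le_min (Real.rpow_le_rpow (le_max_left _ _)
        (max_le_max le_rfl (by linarith)) hr.le) le_rfl
    · exact min_le_min (Real.rpow_le_rpow (le_max_left _ _)
        (max_le_max le_rfl (by linarith)) hr.le) le_rfl
  · apply max_le
    · calc min ((max 0 (M - y)) ^ r) (B ^ r)
          ≤ min (|g w₁ - y| ^ r) (B ^ r) := by
            rw [pointwise_loss y r B hr, ← hw₁e]; exact le_max_left _ _
        _ ≤ _ := le_csSup hbddφ ⟨w₁, hw₁, rfl⟩
    · calc min ((max 0 (-(m' - y))) ^ r) (B ^ r)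
          ≤ min (|g w₂ - y| ^ r) (B ^ r) := by
            rw [pointwise_loss y r B hr, ← hw₂e]; exact le_max_right _ _
        _ ≤ _ := le_csSup hbddφ ⟨w₂, hw₂, rfl⟩
end

section
/- Let F₁,...,F_l be classes of real-valued functions on a sample space, and let G = { max{h₁,...,h_l} : hᵢ ∈ Fᵢ }. Then for any sample of size n, the empirical Rademacher complexity satisfies R̂ₙ(G) ≤ Σⱼ R̂ₙ(Fⱼ). -/
open Set Finset
namespace RadMaxC
variable {T : Type*} {n : ℕ}

def sg (σ : Fin n → Bool) (i : Fin n) : ℝ := if σ i then 1 else -1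

lemma sg_def (σ : Fin n → Bool) (i : Fin n) :
    sg σ i = if σ i then (1:ℝ) else -1 := rfl

lemma sg_mul_le_abs (σ : Fin n → Bool) (i : Fin n) (x : ℝ) : sg σ i * x ≤ |x| := by
  unfold sg; split
  · simpa using le_abs_self x
  · simpa using neg_le_abs x

lemma sg_cases (σ : Fin n → Bool) (i : Fin n) : sg σ i = 1 ∨ sg σ i = -1 := by
  unfold sg; split <;> simp

lemma bdd_of_le {f : T → ℝ} {B : ℝ} (h : ∀ t, f t ≤ B) : BddAbove (range f) :=
  ⟨B, by rintro _ ⟨t, rfl⟩; exact h t⟩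

lemma sg_update_ne (σ : Fin n → Bool) (k i : Fin n) (h : i ≠ k) :
    sg (Function.update σ k (!(σ k))) i = sg σ i := by
  unfold sg; rw [Function.update_of_ne h]

lemma sg_update_self (σ : Fin n → Bool) (k : Fin n) :
    sg (Function.update σ k (!(σ k))) k = -sg σ k := by
  unfold sg; rw [Function.update_self]; cases h : σ k <;> simp

lemma sum_flipK (k : Fin n) (f : (Fin n → Bool) → ℝ) :
    ∑ σ : Fin n → Bool, f (Function.update σ k (!(σ k))) = ∑ σ : Fin n → Bool, f σ := by
  have hinv : Function.Involutive
      (fun (σ : Fin n → Bool) => Function.update σ k (!(σ k))) := by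
    intro σ; funext i
    by_cases h : i = k
    · subst h; simp [Function.update_self]
    · simp [Function.update_of_ne h]
  exact Equiv.sum_comp hinv.toPerm f

lemma absSum_bdd [Nonempty T] (c : T → Fin n → ℝ)
    (hb : ∀ σ : Fin n → Bool, BddAbove (range fun t => ∑ i, sg σ i * c t i)) :
    ∃ B : ℝ, ∀ t, ∑ i, |c t i| ≤ B := by
  refine ⟨∑ ε : Fin n → Bool, max 0 (⨆ t, ∑ i, sg ε i * c t i), fun t => ?_⟩
  have h1 : ∑ i, |c t i| = ∑ i, sg (fun i => decide (0 ≤ c t i)) i * c t i := by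
    apply Finset.sum_congr rfl
    intro i _
    by_cases h : 0 ≤ c t i
    · simp [sg, h, abs_of_nonneg h]
    · simp [sg, h, abs_of_neg (lt_of_not_ge h)]
  rw [h1]
  exact le_trans (le_ciSup (hb (fun i => decide (0 ≤ c t i))) t)
    (le_trans (le_max_right 0 _)
      (Finset.single_le_sum
        (f := fun ε : Fin n → Bool => max 0 (⨆ t, ∑ i, sg ε i * c t i))
        (fun ε' _ => le_max_left _ _)
        (Finset.mem_univ (fun i => decide (0 ≤ c t i)))))

-- imported from previous parts
lemma add_ciSup_le [Nonempty T] {f g : T → ℝ} {R : ℝ} (h : ∀ t t', f t + g t' ≤ R) :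
    (⨆ t, f t) + (⨆ t, g t) ≤ R := by
  have h2 : (⨆ t, g t) ≤ R - ⨆ t, f t := by
    apply ciSup_le; intro t'
    have h3 : (⨆ t, f t) ≤ R - g t' := ciSup_le fun t => by linarith [h t t']
    linarith
  linarith

lemma key1 [Nonempty T] (u c : T → ℝ)
    (h1 : BddAbove (range fun t => u t + c t))
    (h2 : BddAbove (range fun t => u t - c t)) :
    (⨆ t, u t + |c t|) + (⨆ t, u t - |c t|) ≤ (⨆ t, u t + c t) + (⨆ t, u t - c t) := by
  apply add_ciSup_le
  intro t t'
  rcases le_total (c t') (c t) with h | h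
  · have A := le_ciSup h1 t
    have B := le_ciSup h2 t'
    have habs := abs_sub_abs_le_abs_sub (c t) (c t')
    rw [abs_of_nonneg (show (0:ℝ) ≤ c t - c t' by linarith)] at habs
    linarith
  · have A := le_ciSup h1 t'
    have B := le_ciSup h2 t
    have habs := abs_sub_abs_le_abs_sub (c t) (c t')
    rw [abs_of_nonpos (show c t - c t' ≤ (0:ℝ) by linarith)] at habs
    linarith

lemma key [Nonempty T] (u c : T → ℝ) {e : ℝ} (he : e = 1 ∨ e = -1)
    (h1 : BddAbove (range fun t => u t + c t))
    (h2 : BddAbove (range fun t => u t - c t)) :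
    (⨆ t, u t + e * |c t|) + (⨆ t, u t - e * |c t|)
      ≤ (⨆ t, u t + e * c t) + (⨆ t, u t - e * c t) := by
  rcases he with rfl | rfl
  · simpa using key1 u c h1 h2
  · have := key1 u c h1 h2
    simp only [neg_one_mul, ← sub_eq_add_neg, sub_neg_eq_add]
    linarith

lemma contr [Nonempty T] (c : T → Fin n → ℝ)
    (hb : ∀ σ : Fin n → Bool, BddAbove (range fun t => ∑ i, sg σ i * c t i)) :
    ∑ σ : Fin n → Bool, (⨆ t, ∑ i, sg σ i * |c t i|)
      ≤ ∑ σ : Fin n → Bool, ⨆ t, ∑ i, sg σ i * c t i := by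
  obtain ⟨B, hB⟩ := absSum_bdd c hb
  suffices h : ∀ s : Finset (Fin n),
      (∑ σ : Fin n → Bool, ⨆ t, ∑ i, sg σ i * (if i ∈ s then |c t i| else c t i))
        ≤ ∑ σ : Fin n → Bool, ⨆ t, ∑ i, sg σ i * c t i by
    simpa using h Finset.univ
  intro s
  induction s using Finset.induction_on with
  | empty => simp
  | @insert k s hk ih =>
    refine le_trans ?_ ih
    set F : (Fin n → Bool) → ℝ :=
      fun σ => ⨆ t, ∑ i, sg σ i * (if i ∈ insert k s then |c t i| else c t i) with hF
    set G : (Fin n → Bool) → ℝ :=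
      fun σ => ⨆ t, ∑ i, sg σ i * (if i ∈ s then |c t i| else c t i) with hG
    have hpair : ∀ σ : Fin n → Bool,
        F σ + F (Function.update σ k (!(σ k))) ≤ G σ + G (Function.update σ k (!(σ k))) := by
      intro σ
      set u : T → ℝ :=
        fun t => ∑ i ∈ Finset.univ.erase k, sg σ i * (if i ∈ s then |c t i| else c t i) with hu
      have hsplit : ∀ (τ : Fin n → Bool) (w : T → Fin n → ℝ) (t : T),
          ∑ i, sg τ i * w t i = (∑ i ∈ Finset.univ.erase k, sg τ i * w t i) + sg τ k * w t k :=
        fun τ w t => (Finset.sum_erase_add _ _ (Finset.mem_univ k)).symm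
      have herase : ∀ (τ : Fin n → Bool), (∀ i, i ≠ k → sg τ i = sg σ i) → ∀ t,
          (∑ i ∈ Finset.univ.erase k, sg τ i * (if i ∈ insert k s then |c t i| else c t i)) = u t := by
        intro τ hτ t
        apply Finset.sum_congr rfl
        intro i hi
        have hik := (Finset.mem_erase.1 hi).1
        rw [hτ i hik]
        congr 1
        simp [Finset.mem_insert, hik]
      have herase' : ∀ (τ : Fin n → Bool), (∀ i, i ≠ k → sg τ i = sg σ i) → ∀ t,
          (∑ i ∈ Finset.univ.erase k, sg τ i * (if i ∈ s then |c t i| else c t i)) = u t := by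
        intro τ hτ t
        apply Finset.sum_congr rfl
        intro i hi
        rw [hτ i (Finset.mem_erase.1 hi).1]
      have hubdd : ∀ t, u t ≤ ∑ i ∈ Finset.univ.erase k, |c t i| := by
        intro t
        apply Finset.sum_le_sum
        intro i _
        refine (sg_mul_le_abs σ i _).trans (le_of_eq ?_)
        split <;> simp
      have hsum_erase : ∀ t, (∑ i ∈ Finset.univ.erase k, |c t i|) + |c t k| = ∑ i, |c t i| :=
        fun t => Finset.sum_erase_add _ _ (Finset.mem_univ k)
      have h1 : BddAbove (range fun t => u t + c t k) :=
        bdd_of_le (B := B) fun t => by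
          have := hubdd t; have := hsum_erase t; have := hB t
          have := le_abs_self (c t k); linarith
      have h2 : BddAbove (range fun t => u t - c t k) :=
        bdd_of_le (B := B) fun t => by
          have := hubdd t; have := hsum_erase t; have := hB t
          have := neg_le_abs (c t k); linarith
      have hFσ : F σ = ⨆ t, u t + sg σ k * |c t k| := by
        rw [hF]
        refine iSup_congr fun t => ?_
        rw [hsplit σ (fun t i => if i ∈ insert k s then |c t i| else c t i) t, herase σ (fun i _ => rfl) t]
        simp [Finset.mem_insert]
      have hFf : F (Function.update σ k (!(σ k))) = ⨆ t, u t - sg σ k * |c t k| := by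
        rw [hF]
        refine iSup_congr fun t => ?_
        rw [hsplit (Function.update σ k (!(σ k))) (fun t i => if i ∈ insert k s then |c t i| else c t i) t,
          herase _ (fun i hik => sg_update_ne σ k i hik) t, sg_update_self σ k]
        simp [Finset.mem_insert, sub_eq_add_neg]
      have hGσ : G σ = ⨆ t, u t + sg σ k * c t k := by
        rw [hG]
        refine iSup_congr fun t => ?_
        rw [hsplit σ (fun t i => if i ∈ s then |c t i| else c t i) t, herase' σ (fun i _ => rfl) t]
        simp [hk]
      have hGf : G (Function.update σ k (!(σ k))) = ⨆ t, u t - sg σ k * c t k := by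
        rw [hG]
        refine iSup_congr fun t => ?_
        rw [hsplit (Function.update σ k (!(σ k))) (fun t i => if i ∈ s then |c t i| else c t i) t,
          herase' _ (fun i hik => sg_update_ne σ k i hik) t, sg_update_self σ k]
        simp [hk, sub_eq_add_neg]
      rw [hFσ, hFf, hGσ, hGf]
      exact key u (fun t => c t k) (sg_cases σ k) h1 h2
    have hFsum : ∑ σ : Fin n → Bool, F σ + ∑ σ : Fin n → Bool, F σ
        = ∑ σ : Fin n → Bool, (F σ + F (Function.update σ k (!(σ k)))) := by
      rw [Finset.sum_add_distrib, sum_flipK k F]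
    have hGsum : ∑ σ : Fin n → Bool, G σ + ∑ σ : Fin n → Bool, G σ
        = ∑ σ : Fin n → Bool, (G σ + G (Function.update σ k (!(σ k)))) := by
      rw [Finset.sum_add_distrib, sum_flipK k G]
    have := Finset.sum_le_sum (fun σ (_ : σ ∈ Finset.univ) => hpair σ)
    rw [← hFsum, ← hGsum] at this
    linarith


lemma sum_flipAll (f : (Fin n → Bool) → ℝ) :
    ∑ σ : Fin n → Bool, f (fun i => !(σ i)) = ∑ σ : Fin n → Bool, f σ := by
  have hinv : Function.Involutive (fun (σ : Fin n → Bool) => fun i => !(σ i)) := by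
    intro σ; funext i; simp
  exact Equiv.sum_comp hinv.toPerm f

lemma sg_not (σ : Fin n → Bool) (i : Fin n) : sg (fun j => !(σ j)) i = -sg σ i := by
  unfold sg; cases h : σ i <;> simp [h]

lemma maxhalf (x y : ℝ) : max x y = (x + y + |x - y|) / 2 := by
  rcases le_total x y with h | h
  · rw [max_eq_right h, abs_of_nonpos (by linarith)]; ring
  · rw [max_eq_left h, abs_of_nonneg (by linarith)]; ring

lemma two [Nonempty T] (a b : T → Fin n → ℝ)
    (ha : ∀ σ : Fin n → Bool, BddAbove (range fun t => ∑ i, sg σ i * a t i))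
    (hb : ∀ σ : Fin n → Bool, BddAbove (range fun t => ∑ i, sg σ i * b t i)) :
    ∑ σ : Fin n → Bool, (⨆ t, ∑ i, sg σ i * max (a t i) (b t i))
      ≤ (∑ σ : Fin n → Bool, ⨆ t, ∑ i, sg σ i * a t i)
        + ∑ σ : Fin n → Bool, ⨆ t, ∑ i, sg σ i * b t i := by
  obtain ⟨Ba, hBa⟩ := absSum_bdd a ha
  obtain ⟨Bb, hBb⟩ := absSum_bdd b hb
  -- bddness facts
  have habsdiff : ∀ (σ : Fin n → Bool) t, ∑ i, sg σ i * |a t i - b t i| ≤ Ba + Bb := by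
    intro σ t
    calc ∑ i, sg σ i * |a t i - b t i| ≤ ∑ i, (|a t i| + |b t i|) := by
          apply Finset.sum_le_sum
          intro i _
          exact (sg_mul_le_abs σ i _).trans (by rw [abs_abs]; exact abs_sub _ _)
      _ = (∑ i, |a t i|) + ∑ i, |b t i| := Finset.sum_add_distrib
      _ ≤ Ba + Bb := add_le_add (hBa t) (hBb t)
  have hdiffbdd : ∀ σ : Fin n → Bool,
      BddAbove (range fun t => ∑ i, sg σ i * (a t i - b t i)) := by
    intro σ
    apply bdd_of_le (B := Ba + Bb)
    intro t
    calc ∑ i, sg σ i * (a t i - b t i) ≤ ∑ i, |a t i - b t i| :=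
          Finset.sum_le_sum fun i _ => sg_mul_le_abs σ i _
      _ ≤ ∑ i, (|a t i| + |b t i|) := Finset.sum_le_sum fun i _ => abs_sub _ _
      _ = (∑ i, |a t i|) + ∑ i, |b t i| := Finset.sum_add_distrib
      _ ≤ Ba + Bb := add_le_add (hBa t) (hBb t)
  -- step 1: per sigma, sup of max-sum ≤ half sums
  have step1 : ∀ σ : Fin n → Bool,
      (⨆ t, ∑ i, sg σ i * max (a t i) (b t i))
        ≤ (1/2) * (⨆ t, ∑ i, sg σ i * (a t i + b t i))
          + (1/2) * (⨆ t, ∑ i, sg σ i * |a t i - b t i|) := by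
    intro σ
    apply ciSup_le
    intro t
    have hsum : ∑ i, sg σ i * max (a t i) (b t i)
        = (1/2) * (∑ i, sg σ i * (a t i + b t i))
          + (1/2) * (∑ i, sg σ i * |a t i - b t i|) := by
      rw [Finset.mul_sum, Finset.mul_sum, ← Finset.sum_add_distrib]
      apply Finset.sum_congr rfl
      intro i _
      rw [maxhalf (a t i) (b t i)]
      ring
    rw [hsum]
    have h1 : ∑ i, sg σ i * (a t i + b t i) ≤ ⨆ t, ∑ i, sg σ i * (a t i + b t i) := by
      apply le_ciSup (f := fun t => ∑ i, sg σ i * (a t i + b t i)) ?_ t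
      apply bdd_of_le (B := Ba + Bb)
      intro t'
      calc ∑ i, sg σ i * (a t' i + b t' i) ≤ ∑ i, |a t' i + b t' i| :=
            Finset.sum_le_sum fun i _ => sg_mul_le_abs σ i _
        _ ≤ ∑ i, (|a t' i| + |b t' i|) := Finset.sum_le_sum fun i _ => abs_add_le _ _
        _ = (∑ i, |a t' i|) + ∑ i, |b t' i| := Finset.sum_add_distrib
        _ ≤ Ba + Bb := add_le_add (hBa t') (hBb t')
    have h2 : ∑ i, sg σ i * |a t i - b t i| ≤ ⨆ t, ∑ i, sg σ i * |a t i - b t i| :=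
      le_ciSup (f := fun t => ∑ i, sg σ i * |a t i - b t i|)
        (bdd_of_le (B := Ba + Bb) fun t' => habsdiff σ t') t
    linarith
  -- step 2 : plus splits
  have step2 : ∀ σ : Fin n → Bool,
      (⨆ t, ∑ i, sg σ i * (a t i + b t i))
        ≤ (⨆ t, ∑ i, sg σ i * a t i) + ⨆ t, ∑ i, sg σ i * b t i := by
    intro σ
    apply ciSup_le
    intro t
    have h1 := le_ciSup (ha σ) t
    have h2 := le_ciSup (hb σ) t
    have : ∑ i, sg σ i * (a t i + b t i) = (∑ i, sg σ i * a t i) + ∑ i, sg σ i * b t i := by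
      rw [← Finset.sum_add_distrib]; apply Finset.sum_congr rfl; intro i _; ring
    linarith
  -- step 3: abs contraction then minus split
  have step3 : ∑ σ : Fin n → Bool, (⨆ t, ∑ i, sg σ i * |a t i - b t i|)
      ≤ (∑ σ : Fin n → Bool, ⨆ t, ∑ i, sg σ i * a t i)
        + ∑ σ : Fin n → Bool, ⨆ t, ∑ i, sg σ i * b t i := by
    have hc := contr (fun t i => a t i - b t i) hdiffbdd
    refine hc.trans ?_
    have hminus : ∀ σ : Fin n → Bool,
        (⨆ t, ∑ i, sg σ i * (a t i - b t i))
          ≤ (⨆ t, ∑ i, sg σ i * a t i) + ⨆ t, ∑ i, sg (fun j => !(σ j)) i * b t i := by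
      intro σ
      apply ciSup_le
      intro t
      have h1 := le_ciSup (ha σ) t
      have h2 := le_ciSup (hb (fun j => !(σ j))) t
      have heq : ∑ i, sg σ i * (a t i - b t i)
          = (∑ i, sg σ i * a t i) + ∑ i, sg (fun j => !(σ j)) i * b t i := by
        rw [← Finset.sum_add_distrib]
        apply Finset.sum_congr rfl
        intro i _
        rw [sg_not]
        ring
      linarith
    calc ∑ σ : Fin n → Bool, (⨆ t, ∑ i, sg σ i * (a t i - b t i))
        ≤ ∑ σ : Fin n → Bool,
            ((⨆ t, ∑ i, sg σ i * a t i) + ⨆ t, ∑ i, sg (fun j => !(σ j)) i * b t i) :=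
          Finset.sum_le_sum fun σ _ => hminus σ
      _ = (∑ σ : Fin n → Bool, ⨆ t, ∑ i, sg σ i * a t i)
            + ∑ σ : Fin n → Bool, ⨆ t, ∑ i, sg (fun j => !(σ j)) i * b t i :=
          Finset.sum_add_distrib
      _ = (∑ σ : Fin n → Bool, ⨆ t, ∑ i, sg σ i * a t i)
            + ∑ σ : Fin n → Bool, ⨆ t, ∑ i, sg σ i * b t i := by
          rw [sum_flipAll (fun σ => ⨆ t, ∑ i, sg σ i * b t i)]
  -- combine
  have hA : ∑ σ : Fin n → Bool, (⨆ t, ∑ i, sg σ i * max (a t i) (b t i))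
      ≤ (1/2) * (∑ σ : Fin n → Bool, ⨆ t, ∑ i, sg σ i * (a t i + b t i))
        + (1/2) * ∑ σ : Fin n → Bool, (⨆ t, ∑ i, sg σ i * |a t i - b t i|) := by
    rw [Finset.mul_sum, Finset.mul_sum, ← Finset.sum_add_distrib]
    exact Finset.sum_le_sum fun σ _ => step1 σ
  have hP : ∑ σ : Fin n → Bool, (⨆ t, ∑ i, sg σ i * (a t i + b t i))
      ≤ (∑ σ : Fin n → Bool, ⨆ t, ∑ i, sg σ i * a t i)
        + ∑ σ : Fin n → Bool, ⨆ t, ∑ i, sg σ i * b t i := by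
    calc ∑ σ : Fin n → Bool, (⨆ t, ∑ i, sg σ i * (a t i + b t i))
        ≤ ∑ σ : Fin n → Bool,
            ((⨆ t, ∑ i, sg σ i * a t i) + ⨆ t, ∑ i, sg σ i * b t i) :=
          Finset.sum_le_sum fun σ _ => step2 σ
      _ = _ := Finset.sum_add_distrib
  linarith


lemma abs_ciSup_le {m : ℕ} (v : Fin (m+1) → ℝ) : |⨆ j, v j| ≤ ∑ j, |v j| := by
  have hbdd : BddAbove (range v) := (Set.finite_range v).bddAbove
  rw [abs_le]
  constructor
  · have h0 : v 0 ≤ ⨆ j, v j := le_ciSup hbdd 0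
    have h1 : |v 0| ≤ ∑ j, |v j| :=
      Finset.single_le_sum (f := fun j : Fin (m+1) => |v j|)
        (fun j _ => abs_nonneg _) (Finset.mem_univ (0 : Fin (m+1)))
    have := neg_abs_le (v 0)
    linarith
  · apply ciSup_le
    intro j
    exact (le_abs_self _).trans
      (Finset.single_le_sum (f := fun j : Fin (m+1) => |v j|)
        (fun j _ => abs_nonneg _) (Finset.mem_univ j))

set_option maxHeartbeats 1000000 in
lemma main [Nonempty T] : ∀ {l : ℕ} {n : ℕ} (c : T → Fin (l+1) → Fin n → ℝ),
    (∀ (j : Fin (l+1)) (σ : Fin n → Bool),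
      BddAbove (range fun t => ∑ i, sg σ i * c t j i)) →
    ∑ σ : Fin n → Bool, (⨆ t, ∑ i, sg σ i * ⨆ j, c t j i)
      ≤ ∑ j, ∑ σ : Fin n → Bool, ⨆ t, ∑ i, sg σ i * c t j i := by
  intro l
  induction l with
  | zero =>
    intro n c hb
    have : ∀ t (i : Fin n), (⨆ j : Fin 1, c t j i) = c t 0 i := by
      intro t i
      rw [ciSup_unique]
      rfl
    simp only [this]
    exact le_of_eq (Fin.sum_univ_one
      (f := fun j : Fin 1 => ∑ σ : Fin n → Bool, ⨆ t, ∑ i, sg σ i * c t j i)).symm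
  | succ l ih =>
    intro n c hb
    set a : T → Fin n → ℝ := fun t i => ⨆ j : Fin (l+1), c t (j.castSucc) i with haa
    set b : T → Fin n → ℝ := fun t i => c t (Fin.last (l+1)) i with hbb
    have hsupbdd : ∀ t i, BddAbove (range fun j : Fin (l+2) => c t j i) :=
      fun t i => (Set.finite_range _).bddAbove
    have hsupbdd' : ∀ t i, BddAbove (range fun j : Fin (l+1) => c t (j.castSucc) i) :=
      fun t i => (Set.finite_range _).bddAbove
    have hsup : ∀ t (i : Fin n), (⨆ j : Fin (l+2), c t j i) = max (a t i) (b t i) := by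
      intro t i
      apply le_antisymm
      · apply ciSup_le
        intro j
        induction j using Fin.lastCases with
        | last => exact le_max_right _ _
        | cast j =>
          exact le_trans (le_ciSup (hsupbdd' t i) j) (le_max_left _ _)
      · apply max_le
        · apply ciSup_le
          intro j
          exact le_ciSup (hsupbdd t i) j.castSucc
        · exact le_ciSup (hsupbdd t i) (Fin.last (l+1))
    -- boundedness of the a-sums
    have hBs := fun j : Fin (l+1) =>
      absSum_bdd (fun t => c t (j.castSucc)) (fun σ => hb (j.castSucc) σ)
    choose Bf hBf using hBs
    have habdd : ∀ σ : Fin n → Bool, BddAbove (range fun t => ∑ i, sg σ i * a t i) := by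
      intro σ
      apply bdd_of_le (B := ∑ j, Bf j)
      intro t
      calc ∑ i, sg σ i * a t i ≤ ∑ i, |a t i| :=
            Finset.sum_le_sum fun i _ => sg_mul_le_abs σ i _
        _ ≤ ∑ i, ∑ j : Fin (l+1), |c t (j.castSucc) i| :=
            Finset.sum_le_sum fun i _ => abs_ciSup_le (fun j : Fin (l+1) => c t (j.castSucc) i)
        _ = ∑ j : Fin (l+1), ∑ i, |c t (j.castSucc) i| := Finset.sum_comm
        _ ≤ ∑ j : Fin (l+1), Bf j := Finset.sum_le_sum fun j _ => hBf j t
    have hbbdd : ∀ σ : Fin n → Bool, BddAbove (range fun t => ∑ i, sg σ i * b t i) :=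
      fun σ => hb (Fin.last (l+1)) σ
    have h2 := two a b habdd hbbdd
    have hstart : ∑ σ : Fin n → Bool, (⨆ t, ∑ i, sg σ i * ⨆ j, c t j i)
        = ∑ σ : Fin n → Bool, (⨆ t, ∑ i, sg σ i * max (a t i) (b t i)) := by
      apply Finset.sum_congr rfl
      intro σ _
      apply iSup_congr
      intro t
      apply Finset.sum_congr rfl
      intro i _
      rw [hsup t i]
    have hih := ih (fun t (j : Fin (l+1)) i => c t (j.castSucc) i) (fun j σ => hb (j.castSucc) σ)
    rw [hstart, Fin.sum_univ_castSucc
      (f := fun j => ∑ σ : Fin n → Bool, ⨆ t, ∑ i, sg σ i * c t j i)]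
    calc ∑ σ : Fin n → Bool, (⨆ t, ∑ i, sg σ i * max (a t i) (b t i))
        ≤ (∑ σ : Fin n → Bool, ⨆ t, ∑ i, sg σ i * a t i)
          + ∑ σ : Fin n → Bool, ⨆ t, ∑ i, sg σ i * b t i := h2
      _ ≤ (∑ j : Fin (l+1), ∑ σ : Fin n → Bool, ⨆ t, ∑ i, sg σ i * c t (j.castSucc) i)
          + ∑ σ : Fin n → Bool, ⨆ t, ∑ i, sg σ i * c t (Fin.last (l+1)) i := by
        exact add_le_add hih (le_refl _)

end RadMaxC

/-- For function classes F₁,...,F_l (here indexed by `Fin (l+1)`,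
so there are at least one) and `G = {max{h₁,...,h_l} : hⱼ ∈ Fⱼ}`, the empirical
Rademacher complexity satisfies `R̂ₙ(G) ≤ Σⱼ R̂ₙ(Fⱼ)`. -/
theorem rademacher_max_subadditive {Z : Type*} (l n : ℕ)
    (F : Fin (l + 1) → Set (Z → ℝ)) (z : Fin n → Z)
    (hne : ∀ j, (F j).Nonempty)
    (hbdd : ∀ j (σ : Fin n → Bool),
      BddAbove ((fun f : Z → ℝ => ∑ i, (if σ i then (1 : ℝ) else -1) * f (z i)) '' F j)) :
    (1 / (n : ℝ)) * ((∑ σ : Fin n → Bool,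
        sSup {v : ℝ | ∃ h : Fin (l + 1) → Z → ℝ, (∀ j, h j ∈ F j) ∧
          v = ∑ i, (if σ i then (1 : ℝ) else -1) * (⨆ j, h j (z i))}) / 2 ^ n)
      ≤ ∑ j, (1 / (n : ℝ)) * ((∑ σ : Fin n → Bool,
          sSup ((fun f : Z → ℝ => ∑ i, (if σ i then (1 : ℝ) else -1) * f (z i)) '' F j)) / 2 ^ n) := by
  classical
  simp only [← RadMaxC.sg_def] at hbdd ⊢
  set T := {h : Fin (l+1) → Z → ℝ // ∀ j, h j ∈ F j} with hT
  haveI : Nonempty T := ⟨⟨fun j => (hne j).choose, fun j => (hne j).choose_spec⟩⟩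
  have himg : ∀ (j : Fin (l+1)) (σ : Fin n → Bool),
      (fun f : Z → ℝ => ∑ i, RadMaxC.sg σ i * f (z i)) '' F j
        = Set.range (fun t : T => ∑ i, RadMaxC.sg σ i * (t.1 j) (z i)) := by
    intro j σ
    ext v
    constructor
    · rintro ⟨f, hf, rfl⟩
      refine ⟨⟨fun j' => if h : j' = j then f else (hne j').choose, ?_⟩, ?_⟩
      · intro j'
        by_cases h : j' = j
        · subst h
          simpa using hf
        · simp only [dif_neg h]
          exact (hne j').choose_spec
      · simp
    · rintro ⟨t, rfl⟩
      exact ⟨t.1 j, t.2 j, rfl⟩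
  have hset : ∀ σ : Fin n → Bool,
      {v : ℝ | ∃ h : Fin (l+1) → Z → ℝ, (∀ j, h j ∈ F j) ∧
          v = ∑ i, RadMaxC.sg σ i * ⨆ j, h j (z i)}
        = Set.range (fun t : T => ∑ i, RadMaxC.sg σ i * ⨆ j, (t.1 j) (z i)) := by
    intro σ
    ext v
    constructor
    · rintro ⟨h, hh, rfl⟩
      exact ⟨⟨h, hh⟩, rfl⟩
    · rintro ⟨t, rfl⟩
      exact ⟨t.1, t.2, rfl⟩
  have hbdd' : ∀ (j : Fin (l+1)) (σ : Fin n → Bool),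
      BddAbove (Set.range fun t : T => ∑ i, RadMaxC.sg σ i * (t.1 j) (z i)) := by
    intro j σ
    rw [← himg j σ]
    exact hbdd j σ
  have core := RadMaxC.main (T := T) (fun t j i => t.1 j (z i)) hbdd'
  have lhs_eq : (∑ σ : Fin n → Bool,
      sSup {v : ℝ | ∃ h : Fin (l+1) → Z → ℝ, (∀ j, h j ∈ F j) ∧
        v = ∑ i, RadMaxC.sg σ i * ⨆ j, h j (z i)})
      = ∑ σ : Fin n → Bool, ⨆ t : T, ∑ i, RadMaxC.sg σ i * ⨆ j, (t.1 j) (z i) := by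
    apply Finset.sum_congr rfl
    intro σ _
    rw [hset σ, sSup_range]
  have rhs_eq : ∀ j : Fin (l+1), (∑ σ : Fin n → Bool,
      sSup ((fun f : Z → ℝ => ∑ i, RadMaxC.sg σ i * f (z i)) '' F j))
      = ∑ σ : Fin n → Bool, ⨆ t : T, ∑ i, RadMaxC.sg σ i * (t.1 j) (z i) := by
    intro j
    apply Finset.sum_congr rfl
    intro σ _
    rw [himg j σ, sSup_range]
  rw [lhs_eq]
  simp only [rhs_eq]
  have hfin : ∑ x : Fin (l+1), (1 / (n:ℝ)) * ((∑ σ : Fin n → Bool,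
        ⨆ t : T, ∑ i, RadMaxC.sg σ i * (t.1 x) (z i)) / 2 ^ n)
      = (1 / (n:ℝ)) * ((∑ x : Fin (l+1), ∑ σ : Fin n → Bool,
        ⨆ t : T, ∑ i, RadMaxC.sg σ i * (t.1 x) (z i)) / 2 ^ n) := by
    rw [Finset.sum_div, Finset.mul_sum]
  rw [hfin]
  gcongr
end
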